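/- Let D be a coherent integral domain that is not a field, Q its quotient field, E = ⊕_{i=1}^∞ Q/D (a countable direct sum of copies of the D-module Q/D), and R = D(+)E the idealization. Then: R is a φ-ring; R/Nil(R) is a coherent integral domain; and R is not nonnil-coherent (there is a finitely generated nonnil ideal of R that is not finitely presented). In fact, for any nonzero nonunit d ∈ D, the element (d,0) is non-nilpotent in R and the annihilator (0 :_R (d,0)) is not a finitely generated ideal of R. -/

import Mathlib

open DirectSum

universe u

/-- A ring is coherent if every finitely generated ideal is finitely presented. -/
def IsCoherentRing (S : Type*) [CommRing S] : Prop :=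
  ∀ I : Ideal S, I.FG → Module.FinitePresentation S I

/-- A commutative ring is a `φ`-ring if its nilradical is a divided prime ideal. -/
def IsPhiRing (R : Type*) [CommRing R] : Prop :=
  (nilradical R).IsPrime ∧ ∀ x : R, x ∉ nilradical R → nilradical R ≤ Ideal.span {x}

/-- A ring is nonnil-coherent if every finitely generated nonnil ideal is
finitely presented as a module. -/
def IsNonnilCoherent (R : Type*) [CommRing R] : Prop :=
  ∀ I : Ideal R, I.FG → ¬ I ≤ nilradical R → Module.FinitePresentation R I

variable (D : Type u) [CommRing D] [IsDomain D]

/-- The `D`-module `Q/D`, where `Q` is the quotient field of `D`. -/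
noncomputable abbrev QModD : Type u :=
  (FractionRing D) ⧸ (LinearMap.range (Algebra.linearMap D (FractionRing D)))

/-- The countable direct sum `E = ⊕_{i=1}^∞ Q/D`. -/
noncomputable abbrev EModD : Type u := ⨁ (_ : ℕ), QModD D

noncomputable instance : Module Dᵐᵒᵖ (EModD D) :=
  Module.compHom _ ((RingHom.id D).fromOpposite fun x y => Commute.all x y)

instance : IsCentralScalar D (EModD D) := ⟨fun _ _ => rfl⟩

noncomputable instance : CommRing (TrivSqZeroExt D (EModD D)) := inferInstance

/-!
Since `D` is reduced, `Nil(R) = 0(+)E` and `R/Nil(R) ≅ D`. The module `E` is divisible, so for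
`x = (d,e)` with `d ≠ 0` every `(0,f)` equals `x·(0,f')` with `d f' = f`: `Nil(R)` is divided.
For a nonzero nonunit `d`, the annihilator of `(d,0)` lies in `0(+)E` and contains `(0,[1/d])`
placed in any summand of `E`. A finitely generated ideal inside `0(+)E` only reaches finitely
many summands, so the annihilator is not finitely generated, and the principal nonnil ideal
`((d,0))` is not finitely presented.
-/

theorem IsCoherentRing.of_ringEquiv {A B : Type*} [CommRing A] [CommRing B] (e : A ≃+* B)
    (h : IsCoherentRing B) : IsCoherentRing A := by
  intro I hI
  let _ : Algebra A B := e.toRingHom.toAlgebra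
  have : Module.FinitePresentation A B :=
    .of_equiv (LinearEquiv.ofBijective (Algebra.linearMap A B) e.bijective)
  let J := I.map (e : A →+* B)
  have : Module.FinitePresentation B J := h J (hI.map _)
  have := Module.FinitePresentation.trans A J B
  have hmap : Submodule.map (Algebra.linearMap A B) I = J.restrictScalars A := by
    ext x
    exact (Ideal.mem_map_of_equiv e x).symm
  let f : I ≃+ J := (Submodule.equivMapOfInjective _ e.injective I).toAddEquiv.trans
    (LinearEquiv.ofEq _ _ hmap).toAddEquiv
  exact .of_equiv (f.toLinearEquiv fun c x => Subtype.ext (map_mul e c (x : A))).symm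

open TrivSqZeroExt Submodule
open Ideal (torsionOf mem_torsionOf_iff quotTorsionOfEquivSpanSingleton)

theorem Ideal.fg_torsionOf_of_finitePresentation {R M : Type*} [CommRing R] [AddCommGroup M]
    [Module R M] (x : M) [Module.FinitePresentation R (R ∙ x)] : (torsionOf R M x).FG := by
  have := Module.FinitePresentation.of_equiv (quotTorsionOfEquivSpanSingleton R M x).symm
  have hker := Module.FinitePresentation.fg_ker (torsionOf R M x).mkQ (mkQ_surjective _)
  rw [ker_mkQ] at hker
  exact hker

theorem not_isNonnilCoherent_of_not_fg_torsionOf {R : Type*} [CommRing R] {x : R}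
    (hx : x ∉ nilradical R) (h : ¬ (torsionOf R R x).FG) : ¬ IsNonnilCoherent R := by
  intro hR
  have := hR (Ideal.span {x}) (fg_span_singleton x)
    fun hle => hx (hle (Ideal.mem_span_singleton_self x))
  exact h (Ideal.fg_torsionOf_of_finitePresentation x)

theorem DirectSum.exists_smul_eq {R ι : Type*} [Semiring R] {N : ι → Type*}
    [∀ i, AddCommMonoid (N i)] [∀ i, Module R (N i)] (r : R)
    (h : ∀ i (n : N i), ∃ p, r • p = n) (m : ⨁ i, N i) : ∃ p, r • p = m := by
  classical
  induction m using DirectSum.induction_on with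
  | zero => exact ⟨0, smul_zero r⟩
  | of i n =>
    obtain ⟨p, rfl⟩ := h i n
    exact ⟨of N i p, (of_smul ..).symm⟩
  | add m m' hm hm' =>
    obtain ⟨p, rfl⟩ := hm
    obtain ⟨p', rfl⟩ := hm'
    exact ⟨p + p', smul_add r p p'⟩

theorem DirectSum.exists_forall_apply_eq_zero_of_fg {R ι : Type*} [Semiring R] [Infinite ι]
    {N : ι → Type*} [∀ i, AddCommMonoid (N i)] [∀ i, Module R (N i)]
    {S : Submodule R (⨁ i, N i)} (hS : S.FG) : ∃ j, ∀ m ∈ S, m j = 0 := by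
  classical
  obtain ⟨T, rfl⟩ := hS
  obtain ⟨j, hj⟩ := Infinite.exists_notMem_finset (T.biUnion fun m => m.support)
  suffices span R T ≤ LinearMap.ker (component R ι N j) from
    ⟨j, fun m hm => this hm⟩
  refine span_le.2 fun m hm => ?_
  by_contra hmj
  exact hj (Finset.mem_biUnion.2 ⟨m, hm, DFinsupp.mem_support_iff.2 hmj⟩)

namespace TrivSqZeroExt

variable {R M : Type*} [CommRing R] [AddCommGroup M] [Module R M] [Module Rᵐᵒᵖ M]
  [IsCentralScalar R M]

theorem nilradical_eq_kerIdeal [IsReduced R] :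
    nilradical (TrivSqZeroExt R M) = kerIdeal R M := by
  ext x
  rw [mem_nilradical, isNilpotent_iff_isNilpotent_fst, isNilpotent_iff_eq_zero]
  rfl

theorem inl_notMem_nilradical [IsReduced R] {r : R} (hr : r ≠ 0) :
    inl r ∉ nilradical (TrivSqZeroExt R M) := by
  rwa [nilradical_eq_kerIdeal]

theorem isPrime_nilradical [IsDomain R] : (nilradical (TrivSqZeroExt R M)).IsPrime := by
  rw [nilradical_eq_kerIdeal]
  exact RingHom.ker_isPrime _

variable (R M) in
noncomputable def quotientNilradicalEquiv [IsReduced R] :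
    TrivSqZeroExt R M ⧸ nilradical (TrivSqZeroExt R M) ≃+* R :=
  (Ideal.quotEquivOfEq nilradical_eq_kerIdeal).trans
    (RingHom.quotientKerEquivOfSurjective (f := (fstHom R R M).toRingHom)
      fun r => ⟨inl r, rfl⟩)

theorem inr_smul_mem_span_singleton (x : TrivSqZeroExt R M) (m : M) :
    inr (x.fst • m) ∈ Ideal.span {x} := by
  rw [Ideal.mem_span_singleton']
  exact ⟨inr m, ext (by simp) (by simp)⟩

theorem isPhiRing_of_divisible [IsDomain R]
    (hdiv : ∀ r : R, r ≠ 0 → ∀ m : M, ∃ p, r • p = m) :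
    IsPhiRing (TrivSqZeroExt R M) := by
  refine ⟨isPrime_nilradical, fun x hx y hy => ?_⟩
  rw [nilradical_eq_kerIdeal] at hx hy
  obtain ⟨p, hp⟩ := hdiv x.fst hx y.snd
  rw [(mem_kerIdeal_iff_inr R M y).1 hy, ← hp]
  exact inr_smul_mem_span_singleton x p

theorem torsionOf_inl_le_kerIdeal [IsDomain R] {r : R} (hr : r ≠ 0) :
    torsionOf (TrivSqZeroExt R M) (TrivSqZeroExt R M) (inl r) ≤ kerIdeal R M := by
  intro x hx
  have := congrArg fst ((mem_torsionOf_iff _ _).1 hx)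
  simp only [smul_eq_mul, fst_mul, fst_inl, fst_zero, mul_eq_zero] at this
  exact this.resolve_right hr

theorem inr_mem_torsionOf_inl {r : R} {m : M} (h : r • m = 0) :
    inr m ∈ torsionOf (TrivSqZeroExt R M) (TrivSqZeroExt R M) (inl r) := by
  rw [mem_torsionOf_iff, smul_eq_mul, inr_mul_inl, op_smul_eq_smul, h, inr_zero]

theorem exists_fg_snd_mem_of_fg {I : Ideal (TrivSqZeroExt R M)} (hI : I.FG)
    (hIker : I ≤ kerIdeal R M) : ∃ S : Submodule R M, S.FG ∧ ∀ x ∈ I, x.snd ∈ S := by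
  obtain ⟨T, rfl⟩ := hI
  refine ⟨span R (snd '' (T : Set (TrivSqZeroExt R M))), fg_span (T.finite_toSet.image _),
    fun x hx => ?_⟩
  induction hx using Submodule.span_induction with
  | mem x hx => exact subset_span ⟨x, hx, rfl⟩
  | zero => exact zero_mem _
  | add x y _ _ hx hy => exact add_mem hx hy
  | smul a x hxI hx =>
    have hx0 : x.fst = 0 := hIker hxI
    rw [smul_eq_mul, snd_mul, hx0, MulOpposite.op_zero, zero_smul, add_zero]
    exact smul_mem _ _ hx

end TrivSqZeroExt

section

variable {D}

namespace QModD

theorem exists_smul_eq {d : D} (hd : d ≠ 0) (q : QModD D) : ∃ p, d • p = q := by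
  obtain ⟨u, rfl⟩ := Submodule.Quotient.mk_surjective _ q
  have hd' : algebraMap D (FractionRing D) d ≠ 0 := by simpa using hd
  refine ⟨Submodule.Quotient.mk ((algebraMap D (FractionRing D) d)⁻¹ * u), ?_⟩
  rw [← Submodule.Quotient.mk_smul, Algebra.smul_def, ← mul_assoc, mul_inv_cancel₀ hd',
    one_mul]

theorem exists_ne_zero_smul_eq_zero {d : D} (hd : d ≠ 0) (hdu : ¬ IsUnit d) :
    ∃ q : QModD D, q ≠ 0 ∧ d • q = 0 := by
  have hd' : algebraMap D (FractionRing D) d ≠ 0 := by simpa using hd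
  refine ⟨Submodule.Quotient.mk (algebraMap D (FractionRing D) d)⁻¹, ?_, ?_⟩
  · rw [Ne, Submodule.Quotient.mk_eq_zero]
    rintro ⟨a, ha⟩
    refine hdu (IsUnit.of_mul_eq_one a (IsFractionRing.injective D (FractionRing D) ?_))
    rw [Algebra.linearMap_apply] at ha
    rw [map_mul, map_one, ha]
    exact mul_inv_cancel₀ hd'
  · rw [← Submodule.Quotient.mk_smul, Submodule.Quotient.mk_eq_zero, Algebra.smul_def,
      mul_inv_cancel₀ hd']
    exact ⟨1, by simp⟩

end QModD

theorem EModD.not_fg_torsionOf_inl {d : D} (hd : d ≠ 0) (hdu : ¬ IsUnit d) :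
    ¬ (torsionOf (TrivSqZeroExt D (EModD D)) (TrivSqZeroExt D (EModD D)) (inl d)).FG := by
  intro hfg
  obtain ⟨S, hSfg, hS⟩ := exists_fg_snd_mem_of_fg hfg (torsionOf_inl_le_kerIdeal hd)
  obtain ⟨j, hj⟩ := DirectSum.exists_forall_apply_eq_zero_of_fg hSfg
  obtain ⟨q, hq, hdq⟩ := QModD.exists_ne_zero_smul_eq_zero hd hdu
  have hdqj : d • of (fun _ => QModD D) j q = 0 := by rw [← of_smul, hdq, map_zero]
  have := hj _ (hS _ (inr_mem_torsionOf_inl hdqj))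
  rw [snd_inr, of_eq_same] at this
  exact hq this

end

/-- Let `D` be a coherent domain that is not a field, `Q` its quotient
field, `E = ⊕_{i=1}^∞ Q/D` and `R = D(+)E` the idealization. Then `R` is a φ-ring,
`R/Nil(R)` is a coherent integral domain, `R` is not nonnil-coherent, and for every
nonzero nonunit `d ∈ D` the element `(d,0)` is non-nilpotent with non-finitely-generated
annihilator. -/
theorem idealization_of_coherent_domain_phiCoherent_not_nonnilCoherent
    (hcoh : IsCoherentRing D) (hnf : ¬ IsField D) :
    IsPhiRing (TrivSqZeroExt D (EModD D)) ∧
      IsDomain ((TrivSqZeroExt D (EModD D)) ⧸ nilradical (TrivSqZeroExt D (EModD D))) ∧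
      IsCoherentRing ((TrivSqZeroExt D (EModD D)) ⧸ nilradical (TrivSqZeroExt D (EModD D))) ∧
      ¬ IsNonnilCoherent (TrivSqZeroExt D (EModD D)) ∧
      ∀ d : D, d ≠ 0 → ¬ IsUnit d →
        (TrivSqZeroExt.inl d ∉ nilradical (TrivSqZeroExt D (EModD D)) ∧
          ¬ (Submodule.colon (⊥ : Ideal (TrivSqZeroExt D (EModD D)))
              (Ideal.span {(TrivSqZeroExt.inl d : TrivSqZeroExt D (EModD D))})).FG) := by
  have := isPrime_nilradical (R := D) (M := EModD D)
  -- with `M` given, the instances are synthesized instead of being unified (slowly) against the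
  -- `CommRing` instance on `TrivSqZeroExt D (EModD D)` declared above
  have hinl {d : D} (hd : d ≠ 0) := inl_notMem_nilradical (M := EModD D) hd
  obtain ⟨d, hd, hdu⟩ := Ring.exists_not_isUnit_of_not_isField hnf
  refine ⟨isPhiRing_of_divisible fun r hr =>
      DirectSum.exists_smul_eq r fun _ => QModD.exists_smul_eq hr,
    Ideal.Quotient.isDomain _, hcoh.of_ringEquiv (quotientNilradicalEquiv D (EModD D)),
    not_isNonnilCoherent_of_not_fg_torsionOf (hinl hd) (EModD.not_fg_torsionOf_inl hd hdu),
    fun d hd hdu => ⟨hinl hd, ?_⟩⟩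
  rw [Submodule.bot_colon, Ideal.span, Ideal.annihilator_span_singleton_eq_torsionOf]
  exact EModD.not_fg_torsionOf_inl hd hdu
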